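/- arXiv:2301.13764 — 2 statements merged into one kernel-verified Lean document; each statement's English description precedes it below -/
import Mathlib

section
/- Suppose (W, H, b) satisfies the Semi-SupRKM stationarity conditions W = (1/η)ΦᵀRH, H = ΦW + 1_n bᵀ + (1/λ₂)R⁻¹LC, and HᵀR1_n = 0_p. Then, with K = ΦΦᵀ and S = I_n - (1_n 1_nᵀ R)/(1_nᵀR1_n), H satisfies the linear system (I_n - (1/η)RSK)RH = (1/λ₂)SᵀLC. -/
open Matrix

private lemma vmv_mul {m n o : Type*} [Fintype n] (u : m → ℝ) (v : n → ℝ) (M : Matrix n o ℝ) :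
    vecMulVec u v * M = vecMulVec u (v ᵥ* M) := by
  ext i j; simp [vecMulVec_apply, mul_apply, vecMul, dotProduct, Finset.mul_sum, mul_assoc]

private lemma mul_vmv {m n o : Type*} [Fintype n] (M : Matrix m n ℝ) (u : n → ℝ) (v : o → ℝ) :
    M * vecMulVec u v = vecMulVec (M *ᵥ u) v := by
  ext i j; simp [vecMulVec_apply, mul_apply, mulVec, dotProduct, Finset.sum_mul, mul_assoc]

private lemma vmv_smul {m n : Type*} (u : m → ℝ) (c : ℝ) (v : n → ℝ) :
    vecMulVec u (c • v) = c • vecMulVec u v := by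
  ext i j; simp [vecMulVec_apply]; ring

private lemma vmv_transpose {m n : Type*} (u : m → ℝ) (v : n → ℝ) :
    (vecMulVec u v)ᵀ = vecMulVec v u := by
  ext i j; simp [vecMulVec_apply, mul_comm]

private lemma vmv_zero {m n : Type*} (u : m → ℝ) : vecMulVec u (0 : n → ℝ) = 0 := by
  ext i j; simp [vecMulVec_apply]

/-- Eliminating `W` and `b` from the Semi-SupRKM stationarity conditions yields the
linear system `(I - (1/η)RSK)RH = (1/λ₂)SᵀLC`. -/
theorem semisup_rkm_linear_system {n p df : ℕ}
    (Φ : Matrix (Fin n) (Fin df) ℝ)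
    (R L : Matrix (Fin n) (Fin n) ℝ) (hRdiag : R.IsDiag) (hRinv : IsUnit R.det)
    (hLdiag : L.IsDiag) (hL01 : ∀ i, L i i = 0 ∨ L i i = 1)
    (C H : Matrix (Fin n) (Fin p) ℝ) (b : Fin p → ℝ)
    (η lam2 : ℝ) (hη : 0 < η) (hlam2 : 0 < lam2)
    (K : Matrix (Fin n) (Fin n) ℝ) (hK : K = Φ * Φᵀ)
    (ones : Fin n → ℝ) (hones : ones = fun _ => 1)
    (hsum : ones ⬝ᵥ (R *ᵥ ones) ≠ 0)
    (S : Matrix (Fin n) (Fin n) ℝ)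
    (hS : S = 1 - (ones ⬝ᵥ (R *ᵥ ones))⁻¹ • (Matrix.vecMulVec ones ones * R))
    (W : Matrix (Fin df) (Fin p) ℝ)
    (hW : W = (1 / η) • (Φᵀ * (R * H)))
    (hstat : H = Φ * W + Matrix.vecMulVec ones b + (1 / lam2) • (R⁻¹ * (L * C)))
    (horth : Hᵀ *ᵥ (R *ᵥ ones) = 0) :
    (1 - (1 / η) • (R * S * K)) * (R * H) = (1 / lam2) • (Sᵀ * (L * C)) := by
  set c : ℝ := ones ⬝ᵥ (R *ᵥ ones) with hc
  have hRsymm : Rᵀ = R := hRdiag.isSymm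
  -- transpose of S
  have hSt : Sᵀ = 1 - c⁻¹ • (R * vecMulVec ones ones) := by
    rw [hS]; simp [transpose_sub, transpose_smul, transpose_mul, hRsymm, vmv_transpose]
  -- Sᵀ * R = R * S
  have hStR : Sᵀ * R = R * S := by
    rw [hSt, hS, sub_mul, mul_sub, one_mul, mul_one, smul_mul_assoc, mul_smul_comm,
      Matrix.mul_assoc]
  -- column sums of R * H vanish
  have hcolsum : ones ᵥ* (R * H) = 0 := by
    have h0 : (R * H)ᵀ = Hᵀ * R := by rw [transpose_mul, hRsymm]
    rw [← mulVec_transpose, h0, ← Matrix.mulVec_mulVec, horth]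
  -- Sᵀ absorbs R * H
  have hA : Sᵀ * (R * H) = R * H := by
    rw [hSt, Matrix.sub_mul, Matrix.one_mul, Matrix.smul_mul, Matrix.mul_assoc,
      vmv_mul, hcolsum, vmv_zero, Matrix.mul_zero, smul_zero, sub_zero]
  -- Sᵀ kills the bias term
  have hB : Sᵀ * (R * vecMulVec ones b) = 0 := by
    have h1 : vecMulVec ones ones * (R * vecMulVec ones b) = c • vecMulVec ones b := by
      rw [mul_vmv, vmv_mul]
      have h2 : ones ᵥ* vecMulVec (R *ᵥ ones) b = c • b := by
        ext j; simp [vecMul, vecMulVec_apply, dotProduct, Finset.sum_mul, hc, mul_assoc]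
      rw [h2, vmv_smul]
    rw [hSt, Matrix.sub_mul, Matrix.one_mul, Matrix.smul_mul, Matrix.mul_assoc, h1,
      Matrix.mul_smul, smul_smul, inv_mul_cancel₀ hsum, one_smul, sub_self]
  -- key equation: R H = (1/η) R K R H + R 1 bᵀ + (1/λ₂) L C
  have hRRinv : R * R⁻¹ = 1 := Matrix.mul_nonsing_inv R hRinv
  have h2 : R * (Φ * W) = (1 / η) • (R * (K * (R * H))) := by
    rw [hW, Matrix.mul_smul, Matrix.mul_smul, hK, Matrix.mul_assoc]
  have h3 : R * (R⁻¹ * (L * C)) = L * C := by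
    rw [← Matrix.mul_assoc, hRRinv, Matrix.one_mul]
  have hE : R * H = (1 / η) • (R * (K * (R * H))) + R * vecMulVec ones b
      + (1 / lam2) • (L * C) := by
    calc R * H = R * (Φ * W + Matrix.vecMulVec ones b + (1 / lam2) • (R⁻¹ * (L * C))) := by
          rw [← hstat]
      _ = R * (Φ * W) + R * vecMulVec ones b + (1 / lam2) • (R * (R⁻¹ * (L * C))) := by
          rw [Matrix.mul_add, Matrix.mul_add, Matrix.mul_smul]
      _ = _ := by rw [h2, h3]
  -- multiply hE on the left by Sᵀ
  have h4 : Sᵀ * ((1 / η) • (R * (K * (R * H)))) = (1 / η) • (R * S * (K * (R * H))) := by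
    rw [Matrix.mul_smul, ← Matrix.mul_assoc, hStR]
  have h5 := congrArg (fun M => Sᵀ * M) hE
  rw [Matrix.mul_add, Matrix.mul_add, hA, hB, add_zero, h4, Matrix.mul_smul] at h5
  -- conclude
  rw [Matrix.sub_mul, Matrix.one_mul, Matrix.smul_mul, Matrix.mul_assoc (R * S) K (R * H)]
  nth_rewrite 1 [h5]
  abel
end

section
/- Under the Semi-SupRKM stationarity conditions (with W = (1/η)ΦᵀRH eliminated), the bias satisfies bᵀ = -(1/(1_nᵀR1_n))·((1/η)·1_nᵀR K R H + (1/λ₂)·1_nᵀLC). -/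
open Matrix

private lemma vecMul_smul_mat {m n : ℕ} (x : Fin m → ℝ) (c : ℝ)
    (M : Matrix (Fin m) (Fin n) ℝ) : x ᵥ* (c • M) = c • (x ᵥ* M) := by
  ext j
  simp [Matrix.vecMul, dotProduct, Finset.mul_sum, mul_left_comm]

/-- Under the Semi-SupRKM stationarity conditions (with `W` eliminated), the bias is
`bᵀ = -(1/(1ᵀR1))·((1/η)1ᵀRKRH + (1/λ₂)1ᵀLC)`. -/
theorem semisup_rkm_bias_formula {n p : ℕ}
    (K R L : Matrix (Fin n) (Fin n) ℝ) (hRdiag : R.IsDiag) (hRinv : IsUnit R.det)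
    (hLdiag : L.IsDiag) (hL01 : ∀ i, L i i = 0 ∨ L i i = 1)
    (C H : Matrix (Fin n) (Fin p) ℝ) (b : Fin p → ℝ)
    (η lam2 : ℝ) (hη : 0 < η) (hlam2 : 0 < lam2)
    (ones : Fin n → ℝ) (hones : ones = fun _ => 1)
    (hsum : ones ⬝ᵥ (R *ᵥ ones) ≠ 0)
    (hstat : H = (1 / η) • (K * (R * H)) + Matrix.vecMulVec ones b
        + (1 / lam2) • (R⁻¹ * (L * C)))
    (horth : Hᵀ *ᵥ (R *ᵥ ones) = 0) :
    b = -(ones ⬝ᵥ (R *ᵥ ones))⁻¹ •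
        ((1 / η) • (ones ᵥ* (R * K * R * H)) + (1 / lam2) • (ones ᵥ* (L * C))) := by
  have hRsymm : Rᵀ = R := hRdiag.isSymm
  have hRR : R * R⁻¹ = 1 := mul_nonsing_inv R hRinv
  set s := ones ⬝ᵥ (R *ᵥ ones) with hs
  have key := congrArg (fun M => (ones ᵥ* R) ᵥ* M) hstat
  simp only [Matrix.vecMul_add, vecMul_smul_mat] at key
  have h1 : (ones ᵥ* R) ᵥ* H = 0 := by
    rw [← hRsymm, Matrix.vecMul_transpose, ← Matrix.mulVec_transpose, horth]
  have h2 : (ones ᵥ* R) ᵥ* (K * (R * H)) = ones ᵥ* (R * K * R * H) := by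
    rw [Matrix.vecMul_vecMul]
    congr 1
    simp [Matrix.mul_assoc]
  have hs' : s = (ones ᵥ* R) ⬝ᵥ ones := by rw [hs, Matrix.dotProduct_mulVec]
  have h3 : (ones ᵥ* R) ᵥ* Matrix.vecMulVec ones b = s • b := by
    ext j
    simp only [Matrix.vecMul, dotProduct, Matrix.vecMulVec_apply, Pi.smul_apply,
      smul_eq_mul, hs']
    rw [Finset.sum_mul]
    exact Finset.sum_congr rfl fun i _ => by ring
  have h4 : (ones ᵥ* R) ᵥ* (R⁻¹ * (L * C)) = ones ᵥ* (L * C) := by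
    rw [Matrix.vecMul_vecMul, ← Matrix.mul_assoc, hRR, Matrix.one_mul]
  rw [h1, h2, h3, h4] at key
  have hsb : s • b = -((1 / η) • (ones ᵥ* (R * K * R * H)) + (1 / lam2) • (ones ᵥ* (L * C))) := by
    linear_combination (norm := module) -key
  have hb : b = s⁻¹ • (s • b) := by
    rw [smul_smul, inv_mul_cancel₀ hsum, one_smul]
  rw [hb, hsb, smul_neg, ← neg_smul]
end
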